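/- Let r be the substitution on {0,1,2} with r(0) = 012, r(1) = 012, r(2) = 01, let u be the substitution on {0,1} with u(0) = 01, u(1) = 0010, and let s be the letter-to-letter map with s(0) = s(2) = 0 and s(1) = 1, all extended to words by concatenation. Then for every n ≥ 1, u^n(0) = s(r^{n−1}(01)) and u^n(1) = s(r^{n−1}(2012)). -/

import Mathlib

/-!
The substitution `φ : 0 ↦ 01, 1 ↦ 2012` conjugates `u` into `r`, that is `r ∘ φ = φ ∘ u`,
and `s ∘ φ = u`. Hence `u^n = s ∘ φ ∘ u^(n-1) = s ∘ r^(n-1) ∘ φ`; evaluate at the letters `0`, `1`.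
-/

/-- The substitution `u` with `u(0) = 01` and `u(1) = 0010`. -/
def usub : ℕ → List ℕ
  | 0 => [0, 1]
  | 1 => [0, 0, 1, 0]
  | _ => []

/-- `u` extended to words by concatenation. -/
def uapp (w : List ℕ) : List ℕ := w.flatMap usub

/-- The substitution `r` with `r(0) = 012`, `r(1) = 012`, `r(2) = 01`. -/
def rsub : ℕ → List ℕ
  | 0 => [0, 1, 2]
  | 1 => [0, 1, 2]
  | 2 => [0, 1]
  | _ => []

/-- `r` extended to words by concatenation. -/
def rapp (w : List ℕ) : List ℕ := w.flatMap rsub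

/-- The coding `s` with `s(0) = s(2) = 0`, `s(1) = 1`, extended letterwise. -/
def smap (w : List ℕ) : List ℕ := w.map (fun a => if a = 1 then 1 else 0)

namespace List

theorem flatMap_semiconj {α β : Type*} {φ : α → List β} {σ : α → List α}
    {τ : β → List β} (h : ∀ a, (φ a).flatMap τ = (σ a).flatMap φ) :
    Function.Semiconj (flatMap φ) (flatMap σ) (flatMap τ) := by
  intro w
  simp only [flatMap_assoc]
  exact congrArg w.flatMap (funext fun a => (h a).symm)

end List

def phisub : ℕ → List ℕ
  | 0 => [0, 1]
  | 1 => [2, 0, 1, 2]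
  | _ => []

def phiapp (w : List ℕ) : List ℕ := w.flatMap phisub

theorem phiapp_semiconj : Function.Semiconj phiapp uapp rapp :=
  List.flatMap_semiconj fun
    | 0 => rfl
    | 1 => rfl
    | _ + 2 => rfl

theorem smap_phiapp (w : List ℕ) : smap (phiapp w) = uapp w := by
  simp only [smap, phiapp, uapp, List.map_flatMap]
  congr 1
  funext a
  rcases a with _ | _ | _ <;> rfl

theorem u_pow_eq_s_r_pow :
    ∀ n : ℕ, 1 ≤ n →
      uapp^[n] [0] = smap (rapp^[n - 1] [0, 1]) ∧
      uapp^[n] [1] = smap (rapp^[n - 1] [2, 0, 1, 2]) := by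
  intro n hn
  obtain ⟨m, rfl⟩ := Nat.exists_eq_add_of_le' hn
  have key (w : List ℕ) : uapp^[m + 1] w = smap (rapp^[m] (phiapp w)) := by
    rw [← (phiapp_semiconj.iterate_right m).eq, smap_phiapp, Function.iterate_succ_apply']
  exact ⟨key [0], key [1]⟩
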